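/- If X is a binomial random variable with parameters n and p, and k ≤ np, then P(X ≤ k) ≤ exp(-np·H(k/(np))), where H(x) = 1 - x + x·log(x) for x > 0 and H(0) = 1. -/

import Mathlib

/-!
Chernoff's method: for `0 < t ≤ 1` the indicator of `{i ≤ k}` is dominated by `t ^ (i - k)`, so
`P(X ≤ k) ≤ t ^ (-k) · E[t ^ X] = t ^ (-k) (1 - p + p t) ^ n ≤ t ^ (-k) exp (n p (t - 1))`.
The choice `t = k / (n p)` turns the right-hand side into `exp (-n p H (k / (n p)))`.
The case `k = 0` is the limit `t → 0`, and is read off directly from `P(X ≤ 0) = (1 - p) ^ n`.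
-/

open Finset Real

/-- `H(x) = 1 - x + x log x` (note `Real.log 0 = 0`, so `H 0 = 1` automatically). -/
noncomputable def H (x : ℝ) : ℝ := 1 - x + x * Real.log x

noncomputable def binomialCDF (n : ℕ) (p k : ℝ) : ℝ :=
  ∑ i ∈ range (n + 1), if (i : ℝ) ≤ k then (n.choose i : ℝ) * p ^ i * (1 - p) ^ (n - i) else 0

theorem sum_ite_le_rpow_neg_mul_sum_mul_pow {s : Finset ℕ} {b : ℕ → ℝ}
    (hb : ∀ i ∈ s, 0 ≤ b i) {t : ℝ} (ht0 : 0 < t) (ht1 : t ≤ 1) (k : ℝ) :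
    ∑ i ∈ s, (if (i : ℝ) ≤ k then b i else 0) ≤ t ^ (-k) * ∑ i ∈ s, b i * t ^ i := by
  rw [mul_sum]
  refine sum_le_sum fun i hi => ?_
  have hweight : t ^ (-k) * (b i * t ^ i) = t ^ ((i : ℝ) - k) * b i := by
    rw [sub_eq_neg_add, rpow_add ht0, rpow_natCast]
    ring
  rw [hweight]
  split_ifs with hik
  · exact le_mul_of_one_le_left (hb i hi)
      (one_le_rpow_of_pos_of_le_one_of_nonpos ht0 ht1 (sub_nonpos.2 hik))
  · exact mul_nonneg (rpow_nonneg ht0.le _) (hb i hi)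

theorem sum_choose_mul_pow_mul_pow_mul_pow (n : ℕ) (p t : ℝ) :
    ∑ i ∈ range (n + 1), (n.choose i : ℝ) * p ^ i * (1 - p) ^ (n - i) * t ^ i
      = (p * t + (1 - p)) ^ n := by
  rw [add_pow]
  exact sum_congr rfl fun i _ => by ring

theorem one_add_pow_le_exp_mul {x : ℝ} (hx : -1 ≤ x) (n : ℕ) :
    (1 + x) ^ n ≤ exp (n * x) := by
  rw [exp_nat_mul]
  exact pow_le_pow_left₀ (by linarith) (by linarith [add_one_le_exp x]) n

section binomial

variable {n : ℕ} {p : ℝ}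

theorem binomialCDF_le_rpow_neg_mul_exp (hp0 : 0 ≤ p) (hp1 : p ≤ 1) {t : ℝ} (ht0 : 0 < t)
    (ht1 : t ≤ 1) (k : ℝ) :
    binomialCDF n p k ≤ t ^ (-k) * exp (n * p * (t - 1)) := by
  have hq : 0 ≤ 1 - p := sub_nonneg.2 hp1
  have hterm : ∀ i ∈ range (n + 1), 0 ≤ (n.choose i : ℝ) * p ^ i * (1 - p) ^ (n - i) :=
    fun i _ => by positivity
  calc binomialCDF n p k
      ≤ t ^ (-k) * (p * t + (1 - p)) ^ n := by
        rw [← sum_choose_mul_pow_mul_pow_mul_pow]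
        exact sum_ite_le_rpow_neg_mul_sum_mul_pow hterm ht0 ht1 k
    _ ≤ t ^ (-k) * exp (n * p * (t - 1)) := by
        gcongr
        rw [show p * t + (1 - p) = 1 + p * (t - 1) by ring, mul_assoc]
        exact one_add_pow_le_exp_mul (by nlinarith) n

theorem binomialCDF_of_neg {k : ℝ} (hk : k < 0) : binomialCDF n p k = 0 :=
  sum_eq_zero fun i _ => if_neg (hk.trans_le (Nat.cast_nonneg i)).not_ge

theorem binomialCDF_zero : binomialCDF n p 0 = (1 - p) ^ n := by
  rw [binomialCDF, sum_eq_single 0]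
  · simp
  · intro i _ hi
    exact if_neg (by exact_mod_cast (Nat.pos_of_ne_zero hi).not_ge)
  · simp

end binomial

theorem rpow_neg_mul_exp_eq_exp_neg_mul_H {μ k : ℝ} (hμ : 0 < μ) (hk : 0 < k) :
    (k / μ) ^ (-k) * exp (μ * (k / μ - 1)) = exp (-μ * H (k / μ)) := by
  rw [rpow_def_of_pos (div_pos hk hμ), ← exp_add, H]
  congr 1
  field_simp
  ring

/-- Chernoff lower-tail bound for a binomial random variable `X ~ Bi(n, p)`:
if `k ≤ np` then `P(X ≤ k) ≤ exp(-np · H(k/(np)))`. -/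
theorem binomial_lower_tail_chernoff (n : ℕ) (p : ℝ) (hp0 : 0 ≤ p) (hp1 : p ≤ 1)
    (k : ℝ) (hk : k ≤ (n : ℝ) * p) :
    (∑ i ∈ Finset.range (n + 1),
        if (i : ℝ) ≤ k then (n.choose i : ℝ) * p ^ i * (1 - p) ^ (n - i) else 0)
      ≤ Real.exp (-((n : ℝ) * p) * H (k / ((n : ℝ) * p))) := by
  change binomialCDF n p k ≤ _
  rcases lt_trichotomy k 0 with hneg | rfl | hpos
  · rw [binomialCDF_of_neg hneg]
    positivity
  · have hH : H (0 / ((n : ℝ) * p)) = 1 := by simp [H]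
    rw [binomialCDF_zero, hH, mul_one, sub_eq_add_neg, ← mul_neg]
    exact one_add_pow_le_exp_mul (by linarith) n
  · have hμ : 0 < (n : ℝ) * p := hpos.trans_le hk
    rw [← rpow_neg_mul_exp_eq_exp_neg_mul_H hμ hpos]
    exact binomialCDF_le_rpow_neg_mul_exp hp0 hp1 (div_pos hpos hμ) ((div_le_one hμ).2 hk) k
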